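/- arXiv:1207.3387 — 6 statements merged into one kernel-verified Lean document; each statement's English description precedes it below -/
import Mathlib

section
/- Let p be an odd prime, s a positive integer, and γ ∈ F_{p^s} with γ² = -1. Let m be an odd positive integer with m ≡ 3 (mod 4). Then the map sending f(x) to f(γx) induces a well-defined ring isomorphism from F_{p^s}[x]/(x^m - 1) to F_{p^s}[x]/(x^m - γ). -/
open Polynomial

theorem ring_iso_m_three_mod_four (p s : ℕ) (hp : p.Prime) (hodd : Odd p) (hs : 0 < s)
    (F : Type*) [Field F] [Fintype F] (hF : Fintype.card F = p ^ s)
    (γ : F) (hγ : γ ^ 2 = -1) (m : ℕ) (hm : 0 < m) (hmodd : Odd m) (hm4 : m % 4 = 3) :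
    ∃ e : (F[X] ⧸ Ideal.span {(X : F[X]) ^ m - 1}) ≃+*
          (F[X] ⧸ Ideal.span {(X : F[X]) ^ m - C γ}),
      ∀ f : F[X], e (Ideal.Quotient.mk _ f) = Ideal.Quotient.mk _ (f.comp (C γ * X)) := by
  have hγm : γ ^ m = -γ := by
    obtain ⟨k, hk⟩ : ∃ k, m = 4 * k + 3 := ⟨m / 4, by omega⟩
    have h4 : γ ^ 4 = 1 := by
      have h : γ ^ 4 = (γ ^ 2) ^ 2 := by ring
      rw [h, hγ]; ring
    calc γ ^ m = (γ ^ 4) ^ k * γ ^ 2 * γ := by rw [hk]; ring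
    _ = -γ := by rw [h4, hγ]; ring
  set I := Ideal.span {(X : F[X]) ^ m - 1} with hIdef
  set J := Ideal.span {(X : F[X]) ^ m - C γ} with hJdef
  have hXmJ : (Ideal.Quotient.mk J) (X ^ m) = Ideal.Quotient.mk J (C γ) := by
    rw [Ideal.Quotient.eq]; exact Ideal.subset_span rfl
  have hXmI : (Ideal.Quotient.mk I) (X ^ m) = Ideal.Quotient.mk I 1 := by
    rw [Ideal.Quotient.eq]; exact Ideal.subset_span rfl
  set φ : F[X] →+* F[X] ⧸ J :=
    (Ideal.Quotient.mk J).comp (eval₂RingHom C (C γ * X)) with hφdef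
  set ψ : F[X] →+* F[X] ⧸ I :=
    (Ideal.Quotient.mk I).comp (eval₂RingHom C (C (-γ) * X)) with hψdef
  have key1 : φ ((X : F[X]) ^ m - 1) = 0 := by
    have h : eval₂ C (C γ * X) ((X : F[X]) ^ m - 1) = C (γ ^ m) * X ^ m - 1 := by
      rw [eval₂_sub, eval₂_one, eval₂_X_pow, mul_pow, ← C_pow]
    rw [hφdef, RingHom.comp_apply, coe_eval₂RingHom, h, map_sub, map_mul, hXmJ,
      ← map_mul, ← C_mul, hγm]
    have h2 : -γ * γ = (1 : F) := by linear_combination -hγ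
    rw [h2]; simp
  have key2 : ψ ((X : F[X]) ^ m - C γ) = 0 := by
    have h : eval₂ C (C (-γ) * X) ((X : F[X]) ^ m - C γ) = C ((-γ) ^ m) * X ^ m - C γ := by
      rw [eval₂_sub, eval₂_C, eval₂_X_pow, mul_pow, ← C_pow]
    have hne : (-γ) ^ m = γ := by
      rw [Odd.neg_pow hmodd, hγm]; ring
    rw [hψdef, RingHom.comp_apply, coe_eval₂RingHom, h, hne, map_sub, map_mul, hXmI]
    simp
  have hI : I ≤ RingHom.ker φ := by
    rw [hIdef, Ideal.span_le, Set.singleton_subset_iff]; exact key1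
  have hJ : J ≤ RingHom.ker ψ := by
    rw [hJdef, Ideal.span_le, Set.singleton_subset_iff]; exact key2
  set e1 : F[X] ⧸ I →+* F[X] ⧸ J := Ideal.Quotient.lift I φ (fun a ha => RingHom.mem_ker.mp (hI ha)) with he1
  set e2 : F[X] ⧸ J →+* F[X] ⧸ I := Ideal.Quotient.lift J ψ (fun a ha => hJ ha) with he2
  have hγγ : γ * -γ = (1 : F) := by linear_combination -hγ
  have hCJ : (Ideal.Quotient.mk J) (C γ) * (Ideal.Quotient.mk J) (C γ) = -1 := by
    rw [← map_mul, ← C_mul, show γ * γ = (-1 : F) from by linear_combination hγ]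
    simp
  have hCI : (Ideal.Quotient.mk I) (C γ) * (Ideal.Quotient.mk I) (C γ) = -1 := by
    rw [← map_mul, ← C_mul, show γ * γ = (-1 : F) from by linear_combination hγ]
    simp
  have h12 : e1.comp e2 = RingHom.id _ := by
    apply Ideal.Quotient.ringHom_ext
    apply Polynomial.ringHom_ext
    · intro a
      simp only [RingHom.comp_apply, he1, he2, hφdef, hψdef, Ideal.Quotient.lift_mk,
        coe_eval₂RingHom, eval₂_C, RingHom.id_apply]
    · simp only [RingHom.comp_apply, he1, he2, hφdef, hψdef, Ideal.Quotient.lift_mk,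
        coe_eval₂RingHom, eval₂_mul, eval₂_C, eval₂_X, RingHom.id_apply, map_mul, map_neg, C_neg]
      linear_combination (-(Ideal.Quotient.mk J (X : F[X]))) * hCJ
  have h21 : e2.comp e1 = RingHom.id _ := by
    apply Ideal.Quotient.ringHom_ext
    apply Polynomial.ringHom_ext
    · intro a
      simp only [RingHom.comp_apply, he1, he2, hφdef, hψdef, Ideal.Quotient.lift_mk,
        coe_eval₂RingHom, eval₂_C, RingHom.id_apply]
    · simp only [RingHom.comp_apply, he1, he2, hφdef, hψdef, Ideal.Quotient.lift_mk,
        coe_eval₂RingHom, eval₂_mul, eval₂_C, eval₂_X, RingHom.id_apply, map_mul, map_neg, C_neg]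
      linear_combination (-(Ideal.Quotient.mk I (X : F[X]))) * hCI
  refine ⟨RingEquiv.ofRingHom e1 e2 h12 h21, fun f => ?_⟩
  have : (RingEquiv.ofRingHom e1 e2 h12 h21) (Ideal.Quotient.mk I f) = e1 (Ideal.Quotient.mk I f) := rfl
  rw [this, he1, Ideal.Quotient.lift_mk, hφdef, RingHom.comp_apply, coe_eval₂RingHom,
    Polynomial.comp]
end

section
/- Let p be an odd prime, s a positive integer, and γ ∈ F_{p^s} with γ² = -1. Let m be an odd positive integer with m ≡ 1 (mod 4). Then the map sending f(x) to f(-γx) induces a well-defined ring isomorphism from F_{p^s}[x]/(x^m - 1) to F_{p^s}[x]/(x^m - γ). -/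
open Polynomial

theorem ring_iso_m_one_mod_four (p s : ℕ) (hp : p.Prime) (hodd : Odd p) (hs : 0 < s)
    (F : Type*) [Field F] [Fintype F] (hF : Fintype.card F = p ^ s)
    (γ : F) (hγ : γ ^ 2 = -1) (m : ℕ) (hm : 0 < m) (hmodd : Odd m) (hm4 : m % 4 = 1) :
    ∃ e : (F[X] ⧸ Ideal.span {(X : F[X]) ^ m - 1}) ≃+*
          (F[X] ⧸ Ideal.span {(X : F[X]) ^ m - C γ}),
      ∀ f : F[X], e (Ideal.Quotient.mk _ f) = Ideal.Quotient.mk _ (f.comp (C (-γ) * X)) := by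
  have hγ4 : γ ^ 4 = 1 := by
    have h : γ ^ 4 = (γ ^ 2) ^ 2 := by ring
    rw [h, hγ]; ring
  have hγm : γ ^ m = γ := by
    obtain ⟨k, hk⟩ : ∃ k, m = 4 * k + 1 := ⟨m / 4, by omega⟩
    rw [hk, pow_add, pow_mul, hγ4, one_pow, pow_one, one_mul]
  have hnegγm : (-γ) ^ m = -γ := by rw [hmodd.neg_pow, hγm]
  set I1 := Ideal.span {(X : F[X]) ^ m - 1} with hI1
  set I2 := Ideal.span {(X : F[X]) ^ m - C γ} with hI2
  set g : F[X] := C (-γ) * X with hg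
  set g' : F[X] := C γ * X with hg'
  let φ' : F[X] →+* (F[X] ⧸ I2) := (Ideal.Quotient.mk I2).comp (eval₂RingHom C g)
  let ψ' : F[X] →+* (F[X] ⧸ I1) := (Ideal.Quotient.mk I1).comp (eval₂RingHom C g')
  have hφ' : ∀ f : F[X], φ' f = Ideal.Quotient.mk I2 (f.comp g) := fun f => rfl
  have hψ' : ∀ f : F[X], ψ' f = Ideal.Quotient.mk I1 (f.comp g') := fun f => rfl
  have hker1 : ∀ a ∈ I1, φ' a = 0 := by
    have hle : I1 ≤ RingHom.ker φ' := by
      rw [hI1, Ideal.span_le]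
      rintro a ⟨rfl⟩
      rw [SetLike.mem_coe, RingHom.mem_ker, hφ']
      have hc : ((X : F[X]) ^ m - 1).comp g = C (-γ) * ((X : F[X]) ^ m - C γ) := by
        rw [sub_comp, pow_comp, X_comp, one_comp, hg, mul_pow, ← C_pow, hnegγm]
        rw [mul_sub, ← C_mul]
        have : -γ * γ = 1 := by
          have : -γ * γ = -(γ ^ 2) := by ring
          rw [this, hγ]; ring
        rw [this, map_one]
      rw [hc, Ideal.Quotient.eq_zero_iff_mem]
      exact Ideal.mul_mem_left _ _ (Ideal.subset_span rfl)
    intro a ha; exact (RingHom.mem_ker).mp (hle ha)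
  have hker2 : ∀ a ∈ I2, ψ' a = 0 := by
    have hle : I2 ≤ RingHom.ker ψ' := by
      rw [hI2, Ideal.span_le]
      rintro a ⟨rfl⟩
      rw [SetLike.mem_coe, RingHom.mem_ker, hψ']
      have hc : ((X : F[X]) ^ m - C γ).comp g' = C γ * ((X : F[X]) ^ m - 1) := by
        rw [sub_comp, pow_comp, X_comp, C_comp, hg', mul_pow, ← C_pow, hγm, mul_sub, mul_one]
      rw [hc, Ideal.Quotient.eq_zero_iff_mem]
      exact Ideal.mul_mem_left _ _ (Ideal.subset_span rfl)
    intro a ha; exact (RingHom.mem_ker).mp (hle ha)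
  let φ := Ideal.Quotient.lift I1 φ' hker1
  let ψ := Ideal.Quotient.lift I2 ψ' hker2
  have hgg' : g.comp g' = X := by
    rw [hg, hg', mul_comp, C_comp, X_comp, ← mul_assoc, ← C_mul]
    have : -γ * γ = 1 := by
      have : -γ * γ = -(γ ^ 2) := by ring
      rw [this, hγ]; ring
    rw [this, map_one, one_mul]
  have hg'g : g'.comp g = X := by
    rw [hg, hg', mul_comp, C_comp, X_comp, ← mul_assoc, ← C_mul]
    have : γ * -γ = 1 := by
      have : γ * -γ = -(γ ^ 2) := by ring
      rw [this, hγ]; ring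
    rw [this, map_one, one_mul]
  have h1 : ψ.comp φ = RingHom.id _ := by
    apply Ideal.Quotient.ringHom_ext
    refine RingHom.ext fun f => ?_
    show ψ (φ (Ideal.Quotient.mk I1 f)) = Ideal.Quotient.mk I1 f
    rw [show φ (Ideal.Quotient.mk I1 f) = φ' f from rfl, hφ',
      show ψ (Ideal.Quotient.mk I2 (f.comp g)) = ψ' (f.comp g) from rfl, hψ',
      comp_assoc, hgg', comp_X]
  have h2 : φ.comp ψ = RingHom.id _ := by
    apply Ideal.Quotient.ringHom_ext
    refine RingHom.ext fun f => ?_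
    show φ (ψ (Ideal.Quotient.mk I2 f)) = Ideal.Quotient.mk I2 f
    rw [show ψ (Ideal.Quotient.mk I2 f) = ψ' f from rfl, hψ',
      show φ (Ideal.Quotient.mk I1 (f.comp g')) = φ' (f.comp g') from rfl, hφ',
      comp_assoc, hg'g, comp_X]
  refine ⟨RingEquiv.ofRingHom φ ψ h2 h1, fun f => ?_⟩
  show φ (Ideal.Quotient.mk I1 f) = Ideal.Quotient.mk I2 (f.comp g)
  rw [show φ (Ideal.Quotient.mk I1 f) = φ' f from rfl, hφ']
end

section
/- Let m be an odd positive integer and q a prime power coprime to m. Then the multiplicative order of q modulo m is even if and only if there exists an integer i with m ∤ 2i such that the q-cyclotomic coset of i modulo m equals the q-cyclotomic coset of -i modulo m. -/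
theorem order_even_iff_exists_symmetric_coset (m q : ℕ) (hm : 0 < m) (hmodd : Odd m)
    (hq : IsPrimePow q) (hcop : Nat.Coprime q m) :
    Even (orderOf (q : ZMod m)) ↔
      ∃ i : ZMod m, 2 * i ≠ 0 ∧
        ({x : ZMod m | ∃ j : ℕ, x = i * (q : ZMod m) ^ j} =
          {x : ZMod m | ∃ j : ℕ, x = -i * (q : ZMod m) ^ j}) := by
  haveI : NeZero m := ⟨hm.ne'⟩
  set Q : ZMod m := (q : ZMod m) with hQdef
  have key : ∀ (i : ZMod m) (k : ℕ), i * Q ^ k = -i →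
      ({x : ZMod m | ∃ j : ℕ, x = i * Q ^ j} = {x : ZMod m | ∃ j : ℕ, x = -i * Q ^ j}) := by
    intro i k hik
    have hik' : -i * Q ^ k = i := by rw [neg_mul, hik, neg_neg]
    ext x
    simp only [Set.mem_setOf_eq]
    constructor
    · rintro ⟨j, rfl⟩
      exact ⟨k + j, by rw [pow_add, ← mul_assoc, hik']⟩
    · rintro ⟨j, rfl⟩
      exact ⟨k + j, by rw [pow_add, ← mul_assoc, hik]⟩
  constructor
  · -- forward
    intro hev
    have hunit : IsUnit Q := (ZMod.isUnit_iff_coprime q m).mpr hcop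
    have hn0 : 0 < orderOf Q := by
      rw [← hunit.unit_spec, orderOf_units]
      exact orderOf_pos _
    obtain ⟨k, hk⟩ := hev
    set n := orderOf Q with hn
    have hk0 : 0 < k := by omega
    have hq2 : 2 ≤ q := hq.two_le
    set Y : ℕ := q ^ k with hY
    have hY1 : 1 ≤ Y := Nat.one_le_pow _ _ (by omega)
    have hQk : Q ^ k ≠ 1 := by
      intro h
      have hdvd : n ∣ k := orderOf_dvd_of_pow_eq_one h
      have := Nat.le_of_dvd hk0 hdvd
      omega
    have hQn : Q ^ n = 1 := pow_orderOf_eq_one Q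
    -- m ∣ q^n - 1
    have hdvdn : m ∣ q ^ n - 1 := by
      rw [← ZMod.natCast_eq_zero_iff, Nat.cast_sub (Nat.one_le_pow _ _ (by omega))]
      push_cast
      rw [← hQdef, hQn, sub_self]
    have hmY : ¬ m ∣ Y - 1 := by
      intro hdv
      apply hQk
      have h0 := (ZMod.natCast_eq_zero_iff _ m).mpr hdv
      rw [Nat.cast_sub hY1, hY] at h0
      push_cast at h0
      exact sub_eq_zero.mp h0
    have hid : q ^ n - 1 = (Y - 1) * (Y + 1) := by
      have hqn : q ^ n = Y * Y := by rw [hk, pow_add]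
      obtain ⟨y, hy⟩ : ∃ y, Y = y + 1 := ⟨Y - 1, by omega⟩
      rw [hqn, hy]
      simp only [Nat.add_sub_cancel]
      zify [show (1:ℕ) ≤ (y+1)*(y+1) from Nat.one_le_iff_ne_zero.mpr (by positivity)]
      ring
    -- extract a prime power
    rw [Nat.dvd_iff_prime_pow_dvd_dvd] at hmY
    push_neg at hmY
    obtain ⟨p, b, hpP, hpbm, hpbY⟩ := hmY
    have hp : p.Prime := hpP
    have hb1 : 1 ≤ b := by
      by_contra h
      exact hpbY (by simpa [show b = 0 by omega] using one_dvd _)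
    have hpm : p ∣ m := dvd_trans (dvd_pow_self p (by omega)) hpbm
    have hp3 : 3 ≤ p := by
      have h2 := hp.two_le
      rcases Nat.lt_or_ge p 3 with h | h
      · have hp2 : p = 2 := by omega
        rw [hp2] at hpm
        rw [Nat.odd_iff] at hmodd
        omega
      · exact h
    have hpbprod : p ^ b ∣ (Y - 1) * (Y + 1) := by
      rw [← hid]; exact hpbm.trans hdvdn
    have hpbY1 : p ^ b ∣ Y + 1 := by
      by_cases hcase : p ∣ Y + 1
      · have hnd : ¬ p ∣ Y - 1 := by
          intro hd
          have : p ∣ (Y + 1) - (Y - 1) := Nat.dvd_sub hcase hd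
          rw [show (Y + 1) - (Y - 1) = 2 by omega] at this
          have := Nat.le_of_dvd (by norm_num) this
          omega
        have hcp : Nat.Coprime (p ^ b) (Y - 1) :=
          Nat.Coprime.pow_left b ((Nat.Prime.coprime_iff_not_dvd hp).mpr hnd)
        exact hcp.dvd_of_dvd_mul_left hpbprod
      · have hcp : Nat.Coprime (p ^ b) (Y + 1) :=
          Nat.Coprime.pow_left b ((Nat.Prime.coprime_iff_not_dvd hp).mpr hcase)
        exact absurd (hcp.dvd_of_dvd_mul_right hpbprod) hpbY
    -- define i
    set c : ℕ := m / p ^ b with hc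
    have hcm : c * p ^ b = m := Nat.div_mul_cancel hpbm
    have hpb3 : 3 ≤ p ^ b := le_trans hp3 (Nat.le_self_pow (by omega) p)
    have hc0 : 0 < c := Nat.div_pos (Nat.le_of_dvd hm hpbm) (by omega)
    have hclt : c < m := Nat.div_lt_self hm (by omega)
    refine ⟨(c : ZMod m), ?_, ?_⟩
    · intro h
      have h0 : ((2 * c : ℕ) : ZMod m) = 0 := by push_cast; exact h
      have hmd : m ∣ 2 * c := (ZMod.natCast_eq_zero_iff _ m).mp h0
      have hmc : m ∣ c := (hmodd.coprime_two_right).dvd_of_dvd_mul_left hmd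
      have := Nat.le_of_dvd hc0 hmc
      omega
    · apply key _ k
      have hmd : m ∣ c * (1 + Y) := by
        rw [← hcm]
        have := mul_dvd_mul_left c (show p ^ b ∣ 1 + Y by rwa [add_comm])
        exact this
      have h0 : ((c * (1 + Y) : ℕ) : ZMod m) = 0 :=
        (ZMod.natCast_eq_zero_iff _ m).mpr hmd
      rw [hY] at h0
      push_cast at h0
      rw [mul_add, mul_one] at h0
      exact eq_neg_of_add_eq_zero_right h0
  · -- backward
    rintro ⟨i, h2i, hset⟩
    have hm1 : 1 < m := by
      rcases Nat.lt_or_ge m 2 with h | h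
      · interval_cases m
        exact absurd (Subsingleton.elim _ _) h2i
      · exact h
    have hi0 : i ≠ 0 := by rintro rfl; simp at h2i
    obtain ⟨j, hj⟩ : ∃ j : ℕ, -i = i * Q ^ j := by
      have hmem : -i ∈ {x : ZMod m | ∃ j : ℕ, x = -i * Q ^ j} := ⟨0, by simp⟩
      rw [← hset] at hmem
      exact hmem
    set a : ℕ := i.val with ha
    have ha0 : a ≠ 0 := fun h => hi0 ((ZMod.val_eq_zero i).mp h)
    have halt : a < m := ZMod.val_lt i
    have hz : ((a * (1 + q ^ j) : ℕ) : ZMod m) = 0 := by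
      push_cast
      rw [ZMod.natCast_rightInverse i, ← hQdef, mul_add, mul_one, ← hj, add_neg_cancel]
    have hdvd : m ∣ a * (1 + q ^ j) := (ZMod.natCast_eq_zero_iff _ m).mp hz
    set d : ℕ := Nat.gcd a m with hd
    have hd0 : 0 < d := Nat.gcd_pos_of_pos_right a hm
    set m'' : ℕ := m / d with hm''
    have hdm : d ∣ m := Nat.gcd_dvd_right a m
    have hda : d ∣ a := Nat.gcd_dvd_left a m
    have hdlt : d < m := lt_of_le_of_lt (Nat.le_of_dvd (by omega) hda) halt
    have hm''m : m'' ∣ m := Nat.div_dvd_of_dvd hdm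
    have hm''0 : 0 < m'' := Nat.div_pos (Nat.le_of_dvd hm hdm) hd0
    have hm''1 : 1 < m'' := by
      by_contra h
      have hm''eq : m'' = 1 := by omega
      have : m = d := by
        have := Nat.div_mul_cancel hdm
        rw [← hm'', hm''eq, one_mul] at this
        omega
      omega
    have hm''odd : ¬ (2 ∣ m'') := by
      intro h2
      have : (2:ℕ) ∣ m := h2.trans hm''m
      rw [Nat.odd_iff] at hmodd
      omega
    -- m'' ∣ 1 + q^j
    have hm''dvd : m'' ∣ 1 + q ^ j := by
      obtain ⟨t, ht⟩ := hdvd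
      have hcp : Nat.Coprime (a / d) m'' := Nat.coprime_div_gcd_div_gcd hd0
      have hstep : m'' ∣ (a / d) * (1 + q ^ j) := by
        refine ⟨t, ?_⟩
        have h1 : d * ((a / d) * (1 + q ^ j)) = d * (m'' * t) := by
          rw [← mul_assoc, Nat.mul_div_cancel' hda, ← mul_assoc, Nat.mul_div_cancel' hdm, ht]
        exact Nat.eq_of_mul_eq_mul_left hd0 h1
      exact (hcp.symm).dvd_of_dvd_mul_left (by rwa [mul_comm] at hstep ⊢)
    haveI : NeZero m'' := ⟨by omega⟩
    by_contra hne
    have hnodd : Odd (orderOf Q) := Nat.not_even_iff_odd.mp hne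
    set n := orderOf Q with hn
    have hQn : Q ^ n = 1 := pow_orderOf_eq_one Q
    -- pass to ZMod m''
    have hQ''n : (q : ZMod m'') ^ n = 1 := by
      have := congrArg (ZMod.castHom hm''m (ZMod m'')) hQn
      rw [hQdef] at this
      rw [map_pow, map_natCast, map_one] at this
      exact this
    have hQ''j : (q : ZMod m'') ^ j = -1 := by
      have h0 : ((1 + q ^ j : ℕ) : ZMod m'') = 0 :=
        (ZMod.natCast_eq_zero_iff _ m'').mpr hm''dvd
      push_cast at h0
      linear_combination h0
    have hcontr : (-1 : ZMod m'') = 1 := by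
      calc (-1 : ZMod m'') = ((q : ZMod m'') ^ j) ^ n := by rw [hQ''j, hnodd.neg_one_pow]
        _ = ((q : ZMod m'') ^ n) ^ j := by rw [← pow_mul, ← pow_mul, mul_comm]
        _ = 1 := by rw [hQ''n, one_pow]
    have h2z : ((2 : ℕ) : ZMod m'') = 0 := by
      push_cast
      linear_combination -hcontr
    have : m'' ∣ 2 := (ZMod.natCast_eq_zero_iff _ m'').mp h2z
    have := Nat.le_of_dvd (by norm_num) this
    have hm''2 : m'' = 2 := by omega
    exact hm''odd (by omega)
end

section
/- Let p be an odd prime, s ≥ 1, n = m·p^r with gcd(m,p) = 1, and suppose x^m + 1 factors over F_{p^s} as a product of distinct monic irreducible polynomials none of which is self-reciprocal (i.e., they occur in reciprocal pairs h_1, h_1*, ..., h_t, h_t*). Then the negacyclic code of length n generated by A(x) = ∏_j h_j^{b_j}(x) · (h_j*)^{p^r - b_j}(x) (for any 0 ≤ b_j ≤ p^r) is self-dual, i.e., A(x) equals B*(x) up to a nonzero scalar, where B(x) = (x^n + 1)/A(x). -/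
open Polynomial

noncomputable def revHom (F : Type*) [Field F] : F[X] →* F[X] where
  toFun := Polynomial.reverse
  map_one' := by simp [Polynomial.reverse]
  map_mul' f g := Polynomial.reverse_mul_of_domain f g

lemma reverse_reverse_of_coeff_zero_ne {F : Type*} [Field F] (f : F[X])
    (h0 : f.coeff 0 ≠ 0) : f.reverse.reverse = f := by
  have ht : f.natTrailingDegree = 0 := natTrailingDegree_eq_zero.2 (Or.inr h0)
  have hd : f.reverse.natDegree = f.natDegree := by
    rw [reverse_natDegree, ht, Nat.sub_zero]
  rw [reverse, hd, reverse]
  ext i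
  rcases le_or_gt i f.natDegree with hi | hi
  · simp [revAt_le hi, revAt_le (Nat.sub_le _ _), Nat.sub_sub_self hi]
  · rw [coeff_reflect, coeff_reflect, revAt_eq_self_of_lt hi, revAt_eq_self_of_lt hi,
      coeff_eq_zero_of_natDegree_lt hi]

theorem self_dual_negacyclic_generator (p s r m t : ℕ) (hp : p.Prime) (hpodd : Odd p)
    (hs : 0 < s) (hr : 1 ≤ r) (hm : 0 < m) (hcop : Nat.Coprime m p)
    (F : Type*) [Field F] [Fintype F] (hF : Fintype.card F = p ^ s)
    (h : Fin t → F[X])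
    (hmonic : ∀ j, (h j).Monic) (hirr : ∀ j, Irreducible (h j))
    (hirr' : ∀ j, Irreducible ((h j).reverse))
    (hns : ∀ j, h j ≠ (h j).reverse)
    (hfact : (X : F[X]) ^ m + 1 = ∏ j, h j * (h j).reverse)
    (b : Fin t → ℕ) (hb : ∀ j, b j ≤ p ^ r)
    (A B : F[X])
    (hA : A = ∏ j, (h j) ^ (b j) * ((h j).reverse) ^ (p ^ r - b j))
    (hAB : A * B = (X : F[X]) ^ (m * p ^ r) + 1) :
    ∃ c : F, c ≠ 0 ∧ A = C c * B.reverse := by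
  -- characteristic of F is p
  haveI hfp : Fact p.Prime := ⟨hp⟩
  haveI hchar : CharP F p := by
    obtain ⟨q, hq⟩ := CharP.exists F
    obtain ⟨n, hqp, hcard⟩ := @FiniteField.card F _ _ q hq
    have hdv : q ∣ p ^ s := by
      rw [← hF, hcard]; exact dvd_pow_self q n.2.ne'
    have : q = p := (Nat.prime_dvd_prime_iff_eq hqp hp).1 (hqp.dvd_of_dvd_pow hdv)
    exact this ▸ hq
  -- each h j has nonzero constant coefficient
  have hc0 : ∀ j, (h j).coeff 0 ≠ 0 := by
    intro j hc
    have hXd : (X : F[X]) ∣ h j := X_dvd_iff.2 hc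
    have hdvd : h j ∣ (X : F[X]) ^ m + 1 := by
      rw [hfact]
      exact dvd_trans (dvd_mul_right _ _) (Finset.dvd_prod_of_mem _ (Finset.mem_univ j))
    have : (X : F[X]) ∣ (X : F[X]) ^ m + 1 := hXd.trans hdvd
    have h0 : ((X : F[X]) ^ m + 1).coeff 0 = 0 := by
      rw [X_dvd_iff.1 this]
    rw [coeff_add, coeff_X_pow, coeff_one, if_neg hm.ne, if_pos rfl] at h0
    simp at h0
  -- A ≠ 0
  have hA0 : A ≠ 0 := by
    rw [hA]
    exact Finset.prod_ne_zero_iff.2 fun j _ =>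
      mul_ne_zero (pow_ne_zero _ (hmonic j).ne_zero)
        (pow_ne_zero _ (hirr' j).ne_zero)
  -- the alternate expression for B
  set B' : F[X] := ∏ j, ((h j).reverse) ^ (b j) * (h j) ^ (p ^ r - b j) with hB'
  have key : A * B' = (X : F[X]) ^ (m * p ^ r) + 1 := by
    have : (X : F[X]) ^ (m * p ^ r) + 1 = ((X : F[X]) ^ m + 1) ^ (p ^ r) := by
      rw [add_pow_char_pow, one_pow, ← pow_mul]
    rw [this, hfact, ← Finset.prod_pow, hA, hB', ← Finset.prod_mul_distrib]
    refine Finset.prod_congr rfl fun j _ => ?_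
    have e : b j + (p ^ r - b j) = p ^ r := Nat.add_sub_cancel' (hb j)
    rw [mul_pow]
    conv_rhs => rw [← e, pow_add, pow_add]
    ring
  have hBB' : B = B' := by
    have := key.trans hAB.symm
    exact mul_left_cancel₀ hA0 this.symm
  refine ⟨1, one_ne_zero, ?_⟩
  rw [map_one, one_mul, hBB', hB']
  rw [show (∏ j, ((h j).reverse) ^ (b j) * (h j) ^ (p ^ r - b j)).reverse
      = revHom F (∏ j, ((h j).reverse) ^ (b j) * (h j) ^ (p ^ r - b j)) from rfl,
    map_prod, hA]
  refine Finset.prod_congr rfl fun j _ => ?_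
  rw [map_mul, map_pow, map_pow]
  show (h j) ^ (b j) * ((h j).reverse) ^ (p ^ r - b j)
      = ((h j).reverse.reverse) ^ (b j) * ((h j).reverse) ^ (p ^ r - b j)
  rw [reverse_reverse_of_coeff_zero_ne _ (hc0 j)]
end

section
/- Let p be an odd prime and s ≥ 1. If some monic irreducible factor g of x^m + 1 over F_{p^s} is self-reciprocal (g = g*), then there is no monic divisor A(x) of (x^m+1)^{p^r} satisfying A(x) = B*(x) with B(x) = (x^{m p^r}+1)/A(x); i.e., no self-dual negacyclic code of length m·p^r over F_{p^s} exists. -/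
open Polynomial

theorem no_self_dual_negacyclic_of_self_reciprocal_factor (p s r m : ℕ) (hp : p.Prime)
    (hpodd : Odd p) (hs : 0 < s) (hr : 1 ≤ r) (hm : 0 < m) (hcop : Nat.Coprime m p)
    (F : Type*) [Field F] [Fintype F] (hF : Fintype.card F = p ^ s)
    (g : F[X]) (hgmonic : g.Monic) (hgirr : Irreducible g)
    (hgdvd : g ∣ (X : F[X]) ^ m + 1) (hgsr : g = g.reverse) :
    ¬ ∃ A B : F[X], A.Monic ∧ A ∣ ((X : F[X]) ^ m + 1) ^ (p ^ r) ∧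
        A * B = (X : F[X]) ^ (m * p ^ r) + 1 ∧ A = B.reverse := by
  rintro ⟨A, B, hAmonic, hAdvd, hAB, hArev⟩
  -- the characteristic of `F` is `p`
  obtain ⟨n, hqprime, hcard⟩ := FiniteField.card F (ringChar F)
  have hpq : ringChar F = p := by
    have h1 : p ∣ (ringChar F) ^ (n : ℕ) := by
      rw [← hcard, hF]; exact dvd_pow_self p hs.ne'
    exact ((Nat.prime_dvd_prime_iff_eq hp hqprime).mp (hp.dvd_of_dvd_pow h1)).symm
  haveI : Fact p.Prime := ⟨hp⟩
  haveI : CharP F p := hpq ▸ ringChar.charP F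
  set P : F[X] := X ^ m + 1 with hP
  -- Frobenius
  have hfrob : (X : F[X]) ^ (m * p ^ r) + 1 = P ^ (p ^ r) := by
    rw [hP, add_pow_char_pow, one_pow, ← pow_mul]
  have hABP : A * B = P ^ (p ^ r) := by rw [hAB, hfrob]
  -- nonvanishing constant coefficients
  have hABeval : (A * B).eval 0 = 1 := by
    rw [hAB]; simp [zero_pow (Nat.mul_ne_zero hm.ne' (pow_ne_zero r hp.pos.ne'))]
  have hAeval : A.eval 0 ≠ 0 := fun h => by simp [eval_mul, h] at hABeval
  have hBeval : B.eval 0 ≠ 0 := fun h => by simp [eval_mul, h] at hABeval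
  have hA0 : A.coeff 0 ≠ 0 := by rwa [coeff_zero_eq_eval_zero]
  have hB0 : B.coeff 0 ≠ 0 := by rwa [coeff_zero_eq_eval_zero]
  have hAne : A ≠ 0 := fun h => hAeval (by simp [h])
  have hBne : B ≠ 0 := fun h => hBeval (by simp [h])
  have hg0 : g.coeff 0 ≠ 0 := by
    obtain ⟨c, hc⟩ := hgdvd
    rw [coeff_zero_eq_eval_zero]
    intro h
    have : P.eval 0 = 1 := by simp [hP, zero_pow hm.ne']
    rw [hc, eval_mul, h, zero_mul] at this
    exact zero_ne_one this
  -- mirror = reverse for polynomials with nonzero constant coefficient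
  have hmir : ∀ f : F[X], f.coeff 0 ≠ 0 → f.mirror = f.reverse := by
    intro f hf
    rw [Polynomial.mirror, natTrailingDegree_eq_zero.mpr (Or.inr hf), pow_zero, mul_one]
  have hgm : g.mirror = g := by rw [hmir g hg0, ← hgsr]
  have hAmB : A = B.mirror := by rw [hmir B hB0]; exact hArev
  have hBmA : B = A.mirror := by rw [hAmB, mirror_mirror]
  have hmirpow : ∀ (f : F[X]) (k : ℕ), (f ^ k).mirror = f.mirror ^ k := by
    intro f k
    induction k with
    | zero => simpa using (mirror_C (1 : F))
    | succ k ih => rw [pow_succ, mirror_mul_of_domain, ih, pow_succ]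
  have step : ∀ C D : F[X], C = D.mirror → ∀ k : ℕ, g ^ k ∣ D → g ^ k ∣ C := by
    rintro C D rfl k ⟨c, rfl⟩
    exact ⟨c.mirror, by rw [mirror_mul_of_domain, hmirpow, hgm]⟩
  have key : ∀ k : ℕ, g ^ k ∣ A ↔ g ^ k ∣ B :=
    fun k => ⟨step B A hBmA k, step A B hAmB k⟩
  -- separability / squarefreeness of P
  have hmF : (m : F) ≠ 0 := by
    rw [Ne, CharP.cast_eq_zero_iff F p]
    intro hdvd
    exact hp.one_lt.ne' (Nat.Coprime.eq_one_of_dvd hcop.symm hdvd)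
  have hsep : P.Separable := by
    have : P = X ^ m - C (-1 : F) := by rw [hP, map_neg, map_one, sub_neg_eq_add]
    rw [this]
    exact separable_X_pow_sub_C (-1) hmF (by norm_num)
  have hsq : Squarefree P := hsep.squarefree
  have hgprime : Prime g := hgirr.prime
  -- multiplicity of g in P is 1
  have eP : emultiplicity g P = 1 := by
    rw [show ((1 : ℕ∞)) = ((1 : ℕ) : ℕ∞) by norm_cast, emultiplicity_eq_coe]
    refine ⟨by simpa using hgdvd, fun h => ?_⟩
    exact hgirr.not_isUnit (hsq g (by rw [← sq]; simpa using h))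
  have hPne : P ≠ 0 := fun h => by
    have : (P).eval 0 = 1 := by simp [hP, zero_pow hm.ne']
    rw [h] at this; simp at this
  -- count multiplicities
  have htot : emultiplicity g A + emultiplicity g B = (p ^ r : ℕ) := by
    rw [← emultiplicity_mul hgprime, hABP, emultiplicity_pow hgprime, eP, mul_one]
  have hab : emultiplicity g A = emultiplicity g B :=
    emultiplicity_eq_emultiplicity_iff.mpr key
  rw [← hab] at htot
  have hfinA : FiniteMultiplicity g A :=
    FiniteMultiplicity.of_not_isUnit hgirr.not_isUnit hAne
  rw [hfinA.emultiplicity_eq_multiplicity] at htot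
  have hkk : multiplicity g A + multiplicity g A = p ^ r := by exact_mod_cast htot
  have : Even (p ^ r) := ⟨multiplicity g A, hkk.symm⟩
  exact (Nat.not_even_iff_odd.mpr (hpodd.pow)) this
end

section
/- Let p and q be distinct primes with p ≡ 1 (mod 4), q ≡ 1 (mod 4), and p not a quadratic residue modulo q. Then for every α ≥ 1, the multiplicative order of p² modulo q^α is even. -/
private lemma four_dvd_aux {n k : ℕ} (h1 : n ∣ 4 * k) (h2 : ¬ n ∣ 2 * k) : 4 ∣ n := by
  rcases Nat.even_or_odd n with he | ho
  · obtain ⟨t, ht⟩ := he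
    have hn : n = 2 * t := by omega
    rcases Nat.even_or_odd t with hte | hto
    · obtain ⟨s, hs⟩ := hte
      exact ⟨s, by omega⟩
    · exfalso
      have htd : t ∣ 2 * k := by
        have : 2 * t ∣ 2 * (2 * k) := by rw [← hn]; convert h1 using 1; ring
        exact (mul_dvd_mul_iff_left (by norm_num : (2:ℕ) ≠ 0)).mp this
      have hco : Nat.Coprime t 2 := by
        simpa [Nat.coprime_two_right] using hto
      have : t ∣ k := (Nat.Coprime.dvd_of_dvd_mul_left hco htd)
      exact h2 (by rw [hn]; exact mul_dvd_mul_left 2 this)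
  · exfalso
    have hco : Nat.Coprime n 4 := by
      have : Nat.Coprime n 2 := by simpa [Nat.coprime_two_right] using ho
      simpa using Nat.Coprime.mul_right this this
    have : n ∣ k := hco.dvd_of_dvd_mul_left h1
    exact h2 (Dvd.dvd.mul_left this 2)

private lemma four_dvd_order (p q : ℕ) (hp : p.Prime) (hq : q.Prime) (hne : p ≠ q)
    (hq4 : q % 4 = 1) (hnqr : ¬ IsSquare (p : ZMod q)) :
    4 ∣ orderOf (p : ZMod q) := by
  haveI : Fact q.Prime := ⟨hq⟩
  have hne0 : (p : ZMod q) ≠ 0 := by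
    rw [Ne, ZMod.natCast_eq_zero_iff]
    intro h
    exact hne ((Nat.prime_dvd_prime_iff_eq hq hp).mp h).symm
  set n := orderOf (p : ZMod q) with hn
  set k := q / 4 with hk
  have hq1 : q - 1 = 4 * k := by omega
  have hq2 : q / 2 = 2 * k := by omega
  have h1 : n ∣ 4 * k := by
    rw [← hq1]
    exact orderOf_dvd_of_pow_eq_one (ZMod.pow_card_sub_one_eq_one hne0)
  have h2 : ¬ n ∣ 2 * k := by
    rw [← hq2]
    intro h
    exact hnqr ((ZMod.euler_criterion q hne0).mpr (orderOf_dvd_iff_pow_eq_one.mp h))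
  exact four_dvd_aux h1 h2

theorem order_p_sq_even_mod_q_pow (p q : ℕ) (hp : p.Prime) (hq : q.Prime) (hne : p ≠ q)
    (hp4 : p % 4 = 1) (hq4 : q % 4 = 1) (hnqr : ¬ IsSquare (p : ZMod q)) :
    ∀ α : ℕ, 1 ≤ α → Even (orderOf ((p : ZMod (q ^ α)) ^ 2)) := by
  intro α hα
  have hdvd : q ∣ q ^ α := dvd_pow_self q (by omega)
  let f : ZMod (q ^ α) →* ZMod q := (ZMod.castHom hdvd (ZMod q)).toMonoidHom
  have hmap : f ((p : ZMod (q ^ α))) = (p : ZMod q) := map_natCast (ZMod.castHom hdvd (ZMod q)) p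
  have h4 : 4 ∣ orderOf (p : ZMod (q ^ α)) := by
    have := orderOf_map_dvd f (p : ZMod (q ^ α))
    rw [hmap] at this
    exact dvd_trans (four_dvd_order p q hp hq hne hq4 hnqr) this
  have hpow : ((p : ZMod (q ^ α)) ^ 2) ^ orderOf ((p : ZMod (q ^ α)) ^ 2) = 1 :=
    pow_orderOf_eq_one _
  have hdvd2 : orderOf (p : ZMod (q ^ α)) ∣ 2 * orderOf ((p : ZMod (q ^ α)) ^ 2) := by
    apply orderOf_dvd_of_pow_eq_one
    rw [pow_mul]
    simpa [pow_mul] using hpow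
  have : 4 ∣ 2 * orderOf ((p : ZMod (q ^ α)) ^ 2) := dvd_trans h4 hdvd2
  obtain ⟨c, hc⟩ := this
  exact ⟨c, by omega⟩
end
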